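/- arXiv:1911.10887 — 3 statements merged into one kernel-verified Lean document; each statement's English description precedes it below -/
import Mathlib

section
/- Let F be a field, and let A = ⊗_{i ∈ I} A_i be an infinite tensor product of finite dimensional unital F-algebras, each A_i of dimension at least 2, with I uncountable, and suppose each A_i does not centralize everything (A_i ⊄ center). If S ⊆ A is a countable subset whose centralizer in A equals F·1, then we reach a contradiction; that is, the centralizer of any countable subset of such an A properly contains F·1. -/
/-!
Every element of `A` already lies in the subalgebra generated by finitely many of the factors,
so a countable `S` lies in the subalgebra generated by the factors indexed by a countable `J ⊆ I`.
Since `I` is uncountable there is an index `i ∉ J`; the factor `φ i` commutes with every factor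
indexed by `J`, hence with `S`, and it contains a noncentral element, which therefore lies in the
centralizer of `S` but not in `F·1`.
-/

namespace Algebra

variable {R A ι : Type*} [CommSemiring R] [Semiring A] [Algebra R A]

theorem adjoin_iUnion_eq_iSup_adjoin_biUnion_finset (s : ι → Set A) :
    adjoin R (⋃ i, s i) = ⨆ J : Finset ι, adjoin R (⋃ j ∈ J, s j) :=
  le_antisymm
    (adjoin_le <| Set.iUnion_subset fun i =>
      (Set.subset_biUnion_of_mem (Finset.mem_singleton_self i)).trans <|
        subset_adjoin.trans (le_iSup (fun J : Finset ι => adjoin R (⋃ j ∈ J, s j)) {i}))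
    (iSup_le fun _ => adjoin_mono (Set.iUnion₂_subset_iUnion _ _))

theorem exists_finset_mem_adjoin_biUnion {s : ι → Set A} {x : A}
    (hx : x ∈ adjoin R (⋃ i, s i)) : ∃ J : Finset ι, x ∈ adjoin R (⋃ j ∈ J, s j) := by
  have hdir : Monotone fun J : Finset ι => adjoin R (⋃ j ∈ J, s j) :=
    fun _ _ hJ => adjoin_mono (Set.biUnion_subset_biUnion_left hJ)
  rw [adjoin_iUnion_eq_iSup_adjoin_biUnion_finset, ← SetLike.mem_coe,
    Subalgebra.coe_iSup_of_directed hdir.directed_le] at hx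
  simpa using hx

theorem exists_countable_subset_adjoin_biUnion {s : ι → Set A} {S : Set A} (hS : S.Countable)
    (hsub : S ⊆ adjoin R (⋃ i, s i)) :
    ∃ J : Set ι, J.Countable ∧ S ⊆ adjoin R (⋃ j ∈ J, s j) := by
  choose J hJ using fun x : S => exists_finset_mem_adjoin_biUnion (hsub x.2)
  have : Countable S := hS.to_subtype
  refine ⟨⋃ x : S, J x, Set.countable_iUnion fun x => (J x).countable_toSet, fun x hx => ?_⟩
  refine adjoin_mono (Set.biUnion_subset_biUnion_left ?_) (hJ ⟨x, hx⟩)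
  exact Set.subset_iUnion (fun x : S => (J x : Set ι)) ⟨x, hx⟩

end Algebra

theorem Subalgebra.bot_lt_of_mem_of_notMem_center {R A : Type*} [CommSemiring R] [Semiring A]
    [Algebra R A] {T : Subalgebra R A} {x : A} (hxT : x ∈ T) (hx : x ∉ center R A) : ⊥ < T :=
  SetLike.lt_iff_le_and_exists.2
    ⟨bot_le, x, hxT, fun hbot => hx ((bot_le : ⊥ ≤ center R A) hbot)⟩

theorem stmt_9_general (F : Type*) [Field F] (I : Type*) (A : Type*) [Ring A] [Algebra F A]
    (𝒜 : I → Type*) [∀ i, Ring (𝒜 i)] [∀ i, Algebra F (𝒜 i)]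
    (φ : ∀ i, 𝒜 i →ₐ[F] A)
    (hgen : Algebra.adjoin F (⋃ i, Set.range (φ i)) = ⊤)
    (hcomm : ∀ i j, i ≠ j → ∀ a b, Commute (φ i a) (φ j b))
    (hI : ¬ Countable I)
    (hnc : ∀ i, ¬ (Set.range (φ i) ⊆ (Subalgebra.center F A : Set A)))
    (S : Set A) (hS : S.Countable) :
    ⊥ < Subalgebra.centralizer F S := by
  obtain ⟨J, hJ, hSJ⟩ := Algebra.exists_countable_subset_adjoin_biUnion
    (s := fun i => Set.range (φ i)) hS (by rw [hgen]; exact fun _ _ => Algebra.mem_top)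
  obtain ⟨i, hiJ⟩ : ∃ i, i ∉ J := by
    by_contra! hJuniv
    exact hI (Set.countable_univ_iff.1 (Set.eq_univ_of_forall hJuniv ▸ hJ))
  obtain ⟨_, ⟨a, rfl⟩, ha⟩ := Set.not_subset.1 (hnc i)
  refine Subalgebra.bot_lt_of_mem_of_notMem_center ((Subalgebra.mem_centralizer_iff F).2 ?_) ha
  intro s hs
  refine (Algebra.commute_of_mem_adjoin_of_forall_mem_commute (hSJ hs) ?_).eq.symm
  simp only [Set.mem_iUnion, Set.mem_range]
  rintro _ ⟨j, hj, b, rfl⟩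
  exact hcomm i j (fun hij => hiJ (hij ▸ hj)) a b

/-- Lemma 2 of the paper: let `A` be an infinite tensor product
(colimit style: `A` is generated by the commuting images of the unital maps
`φ i : 𝒜 i →ₐ[F] A`) of finite dimensional unital algebras `𝒜 i` of dimension at
least `2`, over an uncountable index set `I`, such that no image `φ i (𝒜 i)` is
contained in the center of `A`.  Then the centralizer of any countable subset `S`
of `A` properly contains `F·1`. -/
theorem stmt_9 (F : Type*) [Field F] (I : Type*) (A : Type*) [Ring A] [Algebra F A]
    (𝒜 : I → Type*) [∀ i, Ring (𝒜 i)] [∀ i, Algebra F (𝒜 i)]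
    [∀ i, FiniteDimensional F (𝒜 i)] (hdim : ∀ i, 2 ≤ Module.rank F (𝒜 i))
    (φ : ∀ i, 𝒜 i →ₐ[F] A)
    (hgen : Algebra.adjoin F (⋃ i, Set.range (φ i)) = ⊤)
    (hcomm : ∀ i j, i ≠ j → ∀ a b, Commute (φ i a) (φ j b))
    (hI : ¬ Countable I)
    (hnc : ∀ i, ¬ (Set.range (φ i) ⊆ (Subalgebra.center F A : Set A)))
    (S : Set A) (hS : S.Countable) :
    ⊥ < Subalgebra.centralizer F S :=
  stmt_9_general F I A 𝒜 φ hgen hcomm hI hnc S hS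
end

section
/- Let F be a field containing a primitive l-th root of unity ξ, with l ≥ 2. The F-algebra generated by two elements x, y with relations x^l = y^l = 1 and yx = ξ xy is isomorphic to the matrix algebra M_l(F). -/
/-!
The clock matrix `diag(1, ξ, …, ξ^(l-1))` and the cyclic shift satisfy the defining relations,
so they induce an algebra map from the quotient to `M_l(F)`. It is surjective: `ξ` being
primitive, the clock has distinct diagonal entries, so by Lagrange interpolation its powers
span all diagonal matrices, and multiplying the diagonal matrix units `E_bb` by powers of the
shift gives every `E_ab`. It is injective by counting dimensions: the relation `y x = ξ x y`
reorders any word into a multiple of some `x^i y^j`, and `x^l = y^l = 1` bounds the exponents,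
so the quotient is spanned by `l²` elements.
-/

/-- The relations `x ^ l = 1`, `y ^ l = 1`, `y * x = ξ • (x * y)` on the free
algebra on two generators `x = ι 0`, `y = ι 1`. -/
inductive TwoGenRel (F : Type*) [Field F] (l : ℕ) (ξ : F) :
    FreeAlgebra F (Fin 2) → FreeAlgebra F (Fin 2) → Prop
  | xpow : TwoGenRel F l ξ (FreeAlgebra.ι F (0 : Fin 2) ^ l) 1
  | ypow : TwoGenRel F l ξ (FreeAlgebra.ι F (1 : Fin 2) ^ l) 1
  | comm : TwoGenRel F l ξ (FreeAlgebra.ι F (1 : Fin 2) * FreeAlgebra.ι F (0 : Fin 2))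
      (ξ • (FreeAlgebra.ι F (0 : Fin 2) * FreeAlgebra.ι F (1 : Fin 2)))

section CommutationRelation

open Submodule

variable {R A : Type*} [CommSemiring R] [Semiring A] [Algebra R A] {ξ : R} {x y : A}

theorem pow_mul_pow_eq_smul_of_mul_eq_smul (h : y * x = ξ • (x * y)) (m n : ℕ) :
    y ^ n * x ^ m = ξ ^ (n * m) • (x ^ m * y ^ n) := by
  have hy : ∀ m : ℕ, y * x ^ m = ξ ^ m • (x ^ m * y) := by
    intro m
    induction m with
    | zero => simp
    | succ m ih =>
      rw [pow_succ, ← mul_assoc, ih, smul_mul_assoc, mul_assoc, h, mul_smul_comm, smul_smul,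
        ← mul_assoc, ← pow_succ, pow_succ]
  induction n with
  | zero => simp
  | succ n ih =>
    rw [pow_succ, mul_assoc, hy, mul_smul_comm, ← mul_assoc, ih, smul_mul_assoc, smul_smul,
      mul_assoc, ← pow_succ, ← pow_add, add_one_mul, add_comm]

theorem adjoin_le_span_pow_mul_pow (h : y * x = ξ • (x * y)) :
    Subalgebra.toSubmodule (Algebra.adjoin R {x, y}) ≤
      span R (Set.range fun p : ℕ × ℕ => x ^ p.1 * y ^ p.2) := by
  set T := span R (Set.range fun p : ℕ × ℕ => x ^ p.1 * y ^ p.2)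
  have hmem : ∀ m n : ℕ, x ^ m * y ^ n ∈ T := fun m n => subset_span ⟨(m, n), rfl⟩
  have hmul : T * T ≤ T := by
    rw [span_mul_span, span_le, Set.mul_subset_iff]
    rintro _ ⟨⟨i, j⟩, rfl⟩ _ ⟨⟨m, n⟩, rfl⟩
    have hprod :
        x ^ i * y ^ j * (x ^ m * y ^ n) = ξ ^ (j * m) • (x ^ (i + m) * y ^ (j + n)) := by
      rw [mul_assoc, ← mul_assoc (y ^ j), pow_mul_pow_eq_smul_of_mul_eq_smul h, smul_mul_assoc,
        mul_smul_comm, pow_add, pow_add, mul_assoc, mul_assoc]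
    exact hprod ▸ T.smul_mem _ (hmem _ _)
  let Talg : Subalgebra R A :=
    T.toSubalgebra (by simpa using hmem 0 0) fun _ _ ha hb => hmul (mul_mem_mul ha hb)
  show Algebra.adjoin R {x, y} ≤ Talg
  rw [Algebra.adjoin_le_iff, Set.insert_subset_iff, Set.singleton_subset_iff]
  exact ⟨show x ∈ T by simpa using hmem 1 0, show y ∈ T by simpa using hmem 0 1⟩

theorem span_pow_mul_pow_fin_eq_top {l : ℕ} [NeZero l] (hx : x ^ l = 1) (hy : y ^ l = 1)
    (h : y * x = ξ • (x * y)) (hgen : Algebra.adjoin R {x, y} = ⊤) :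
    span R (Set.range fun p : Fin l × Fin l => x ^ (p.1 : ℕ) * y ^ (p.2 : ℕ)) = ⊤ := by
  have hrange : (Set.range fun p : ℕ × ℕ => x ^ p.1 * y ^ p.2) =
      Set.range fun p : Fin l × Fin l => x ^ (p.1 : ℕ) * y ^ (p.2 : ℕ) := by
    refine subset_antisymm ?_ fun _ ⟨p, hp⟩ => ⟨(p.1, p.2), hp⟩
    rintro _ ⟨⟨m, n⟩, rfl⟩
    refine ⟨(Fin.ofNat l m, Fin.ofNat l n), ?_⟩
    simp only [Fin.val_ofNat, ← pow_eq_pow_mod _ hx, ← pow_eq_pow_mod _ hy]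
  rw [← hrange, eq_top_iff, ← Algebra.toSubmodule_eq_top.2 hgen]
  exact adjoin_le_span_pow_mul_pow h

end CommutationRelation

theorem LinearMap.injective_of_surjective_of_span_eq_top {K V W ι : Type*} [DivisionRing K]
    [AddCommGroup V] [Module K V] [AddCommGroup W] [Module K W] [Fintype ι] {v : ι → V}
    (hv : Submodule.span K (Set.range v) = ⊤) {f : V →ₗ[K] W} (hf : Function.Surjective f)
    (hW : Fintype.card ι ≤ Module.finrank K W) : Function.Injective f := by
  have : Module.Finite K V := Module.finite_def.2 (hv ▸ Submodule.fg_span (Set.finite_range v))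
  have : Module.Finite K W := Module.Finite.of_surjective f hf
  have hV : Module.finrank K V ≤ Fintype.card ι := by
    rw [← finrank_top, ← hv]
    exact finrank_range_le_card v
  exact (LinearMap.injective_iff_surjective_of_finrank_eq_finrank
    (le_antisymm (hV.trans hW) (LinearMap.finrank_le_finrank_of_surjective hf))).2 hf

namespace TwoGenRel

variable (F : Type*) [Field F] (l : ℕ) (ξ : F)

def genX : RingQuot (TwoGenRel F l ξ) := RingQuot.mkAlgHom F _ (FreeAlgebra.ι F 0)

def genY : RingQuot (TwoGenRel F l ξ) := RingQuot.mkAlgHom F _ (FreeAlgebra.ι F 1)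

theorem genX_pow : genX F l ξ ^ l = 1 := by
  simpa [genX] using RingQuot.mkAlgHom_rel F (xpow (F := F) (l := l) (ξ := ξ))

theorem genY_pow : genY F l ξ ^ l = 1 := by
  simpa [genY] using RingQuot.mkAlgHom_rel F (ypow (F := F) (l := l) (ξ := ξ))

theorem genY_mul_genX : genY F l ξ * genX F l ξ = ξ • (genX F l ξ * genY F l ξ) := by
  simpa [genX, genY] using RingQuot.mkAlgHom_rel F (comm (F := F) (l := l) (ξ := ξ))

theorem adjoin_genX_genY : Algebra.adjoin F {genX F l ξ, genY F l ξ} = ⊤ := by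
  have hrange : Set.range (RingQuot.mkAlgHom F (TwoGenRel F l ξ) ∘ FreeAlgebra.ι F) =
      {genX F l ξ, genY F l ξ} := by
    ext z
    simp [genX, genY, Fin.exists_fin_two, eq_comm]
  rw [← hrange, Set.range_comp, Algebra.adjoin_image, FreeAlgebra.adjoin_range_ι,
    Algebra.map_top, AlgHom.range_eq_top]
  exact RingQuot.mkAlgHom_surjective F _

variable {F l ξ} {B : Type*} [Semiring B] [Algebra F B] {a b : B}

def lift (ha : a ^ l = 1) (hb : b ^ l = 1) (hba : b * a = ξ • (a * b)) :
    RingQuot (TwoGenRel F l ξ) →ₐ[F] B :=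
  RingQuot.liftAlgHom F ⟨FreeAlgebra.lift F ![a, b], fun _ _ h => by
    cases h <;> simpa⟩

theorem range_lift (ha : a ^ l = 1) (hb : b ^ l = 1) (hba : b * a = ξ • (a * b)) :
    (lift ha hb hba).range = Algebra.adjoin F {a, b} := by
  rw [← Algebra.map_top, ← adjoin_genX_genY, AlgHom.map_adjoin, Set.image_pair]
  simp [lift, genX, genY]

end TwoGenRel

namespace Matrix

open Polynomial in
theorem diagonal_mem_adjoin_diagonal {F n : Type*} [Field F] [Fintype n] [DecidableEq n]
    {d : n → F} (hd : Function.Injective d) (r : n → F) :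
    diagonal r ∈ Algebra.adjoin F {diagonal d} := by
  have : diagonal r = aeval (diagonal d) (Lagrange.interpolate Finset.univ d r) := by
    rw [← diagonalAlgHom_apply F d, aeval_algHom_apply, aeval_pi_apply, diagonalAlgHom_apply]
    congr 1
    funext i
    rw [coe_aeval_eq_eval, Lagrange.eval_interpolate_at_node r hd.injOn (Finset.mem_univ i)]
  exact this ▸ aeval_mem_adjoin_singleton F _

def clockMatrix {R : Type*} [Semiring R] (l : ℕ) (ξ : R) : Matrix (Fin l) (Fin l) R :=
  diagonal fun i => ξ ^ (i : ℕ)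

-- Sends `e j` to `e (j - 1)`, so that the shift-clock relation carries `ξ` rather than `ξ⁻¹`.
def shiftMatrix (R : Type*) [Semiring R] (l : ℕ) [NeZero l] : Matrix (Fin l) (Fin l) R :=
  of fun i j => if j = i + 1 then 1 else 0

variable {R : Type*} [Semiring R] {l : ℕ}

theorem clockMatrix_pow_eq_one {ξ : R} (hξ : ξ ^ l = 1) : clockMatrix l ξ ^ l = 1 := by
  rw [clockMatrix, diagonal_pow, ← diagonal_one]
  congr 1
  funext i
  rw [Pi.pow_apply, ← pow_mul, mul_comm, pow_mul, hξ, one_pow]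

section Shift

open Fin.NatCast

variable [NeZero l]

theorem shiftMatrix_pow (k : ℕ) :
    shiftMatrix R l ^ k = of fun i j : Fin l => if j = i + (k : Fin l) then 1 else 0 := by
  induction k with
  | zero => ext i j; simp [one_apply, eq_comm]
  | succ k ih =>
    ext i j
    rw [pow_succ, ih, mul_apply, Finset.sum_eq_single (i + k)]
    · simp [shiftMatrix, add_assoc]
    · intro m _ hm
      simp [hm]
    · simp

theorem shiftMatrix_pow_eq_one : shiftMatrix R l ^ l = 1 := by
  ext i j
  simp [shiftMatrix_pow, one_apply, eq_comm]

theorem shiftMatrix_pow_mul_single (k : ℕ) (i j : Fin l) (c : R) :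
    shiftMatrix R l ^ k * single i j c = single (i - k) j c := by
  ext a b
  rw [shiftMatrix_pow, mul_apply, Finset.sum_eq_single i]
  · simp only [of_apply, single_apply, sub_eq_iff_eq_add, ite_mul, one_mul, zero_mul, true_and,
      ite_and]
  · intro m _ hm
    simp [Ne.symm hm]
  · simp

theorem shiftMatrix_mul_clockMatrix {ξ : R} (hξ : ξ ^ l = 1) :
    shiftMatrix R l * clockMatrix l ξ = ξ • (clockMatrix l ξ * shiftMatrix R l) := by
  ext i j
  by_cases hij : j = i + 1
  · simp only [shiftMatrix, clockMatrix, hij, mul_diagonal, diagonal_mul, of_apply, smul_apply,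
      ↓reduceIte, one_mul, mul_one, smul_eq_mul]
    rw [← pow_succ', pow_eq_pow_mod (_ + 1) hξ, Fin.val_add, Fin.val_one', Nat.add_mod_mod]
  · simp [shiftMatrix, clockMatrix, hij]

theorem adjoin_clockMatrix_shiftMatrix {F : Type*} [Field F] {ξ : F} (hξ : IsPrimitiveRoot ξ l) :
    Algebra.adjoin F {clockMatrix l ξ, shiftMatrix F l} = ⊤ := by
  set S := Algebra.adjoin F {clockMatrix l ξ, shiftMatrix F l}
  have hclock : Algebra.adjoin F {clockMatrix l ξ} ≤ S :=
    Algebra.adjoin_mono (Set.singleton_subset_iff.2 (Set.mem_insert _ _))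
  have hshift : shiftMatrix F l ∈ S := Algebra.subset_adjoin (Set.mem_insert_of_mem _ rfl)
  have hsingle : ∀ a b : Fin l, single a b (1 : F) ∈ S := by
    intro a b
    have hbb : single b b (1 : F) ∈ S := by
      rw [← diagonal_single]
      exact hclock (diagonal_mem_adjoin_diagonal
        (fun i j h => Fin.ext (hξ.pow_inj i.isLt j.isLt h)) _)
    have := shiftMatrix_pow_mul_single ((b - a : Fin l) : ℕ) b b (1 : F)
    rw [Fin.cast_val_eq_self, sub_sub_cancel] at this
    exact this ▸ mul_mem (pow_mem hshift _) hbb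
  refine eq_top_iff.2 fun M _ => ?_
  rw [matrix_eq_sum_single M]
  refine Subalgebra.sum_mem _ fun i _ => Subalgebra.sum_mem _ fun j _ => ?_
  rw [← mul_one (M i j), ← smul_eq_mul, ← smul_single]
  exact Subalgebra.smul_mem _ (hsingle i j) _

end Shift

end Matrix

/-- the algebra generated by `x, y` with `x^l = y^l = 1`,
`y x = ξ x y`, for `ξ` a primitive `l`-th root of unity, is isomorphic to `M_l(F)`. -/
theorem stmt_11 (F : Type*) [Field F] (l : ℕ) (hl : 2 ≤ l) (ξ : F)
    (hξ : IsPrimitiveRoot ξ l) :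
    Nonempty (RingQuot (TwoGenRel F l ξ) ≃ₐ[F] Matrix (Fin l) (Fin l) F) := by
  have : NeZero l := ⟨by omega⟩
  let φ := TwoGenRel.lift (Matrix.clockMatrix_pow_eq_one hξ.pow_eq_one)
    Matrix.shiftMatrix_pow_eq_one (Matrix.shiftMatrix_mul_clockMatrix hξ.pow_eq_one)
  have hsurj : Function.Surjective φ := by
    rw [← AlgHom.range_eq_top, TwoGenRel.range_lift, Matrix.adjoin_clockMatrix_shiftMatrix hξ]
  have hspan := span_pow_mul_pow_fin_eq_top (TwoGenRel.genX_pow F l ξ) (TwoGenRel.genY_pow F l ξ)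
    (TwoGenRel.genY_mul_genX F l ξ) (TwoGenRel.adjoin_genX_genY F l ξ)
  have hinj : Function.Injective φ :=
    LinearMap.injective_of_surjective_of_span_eq_top (f := φ.toLinearMap) hspan hsurj
      (by simp [Module.finrank_matrix])
  exact ⟨AlgEquiv.ofBijective φ ⟨hinj, hsurj⟩⟩
end

section
/- Let l be an odd integer ≥ 3, F a field with a primitive l-th root of unity, and Clg(l, ℝ) the generalized Clifford algebra on the ordered set of real numbers. Then the centralizer in Clg(l, ℝ) of the set {x_q : q ∈ ℚ} of generators indexed by rational numbers equals F·1. -/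
/-! The ordered monomials `x s₁ ^ e₁ * ⋯ * x sₖ ^ eₖ` (`s₁ < ⋯ < sₖ`, exponents in `ZMod l`) span
`Clg F l ξ I`, since the commutation relations move a generator into place, and they are linearly
independent, since in the twisted regular representation on `(I →₀ ZMod l) →₀ F` the monomial of
`g` sends `single 0 1` to a nonzero multiple of `single g 1`. Conjugation by `x t` multiplies the monomial of `g` by
`ξ ^ twist g t`, where `twist g t = ∑_{s < t} g s - ∑_{s > t} g s`. So an element commuting with
every `x q`, `q ∈ ℚ`, only involves monomials with `twist g q = 0` for all rational `q`. Comparing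
rationals just below and just above a point `t` of the support of `g` gives `2 * g t = 0`, and `2`
is invertible in `ZMod l` since `l` is odd. -/

/-- The defining relations of the generalized Clifford algebra `Clg(l, I)`:
`x i ^ l = 1`, `x i⁻¹ * x j * x i = ξ • x j` for `i < j`, and
`x i⁻¹ * x j * x i = ξ⁻¹ • x j` for `i > j`, where `x i⁻¹ = x i ^ (l - 1)`. -/
inductive ClgRel (F : Type*) [Field F] (l : ℕ) (ξ : F) (I : Type*) [LinearOrder I] :
    FreeAlgebra F I → FreeAlgebra F I → Prop
  | pow (i : I) : ClgRel F l ξ I (FreeAlgebra.ι F i ^ l) 1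
  | conj_lt {i j : I} (h : i < j) :
      ClgRel F l ξ I (FreeAlgebra.ι F i ^ (l - 1) * FreeAlgebra.ι F j * FreeAlgebra.ι F i)
        (ξ • FreeAlgebra.ι F j)
  | conj_gt {i j : I} (h : j < i) :
      ClgRel F l ξ I (FreeAlgebra.ι F i ^ (l - 1) * FreeAlgebra.ι F j * FreeAlgebra.ι F i)
        (ξ⁻¹ • FreeAlgebra.ι F j)

/-- The generalized Clifford algebra `Clg(l, I)` over `F`. -/
abbrev Clg (F : Type*) [Field F] (l : ℕ) (ξ : F) (I : Type*) [LinearOrder I] :=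
  RingQuot (ClgRel F l ξ I)

/-- The generator `x i` of the generalized Clifford algebra. -/
noncomputable def clgGen (F : Type*) [Field F] (l : ℕ) (ξ : F) {I : Type*} [LinearOrder I]
    (i : I) : Clg F l ξ I :=
  RingQuot.mkAlgHom F (ClgRel F l ξ I) (FreeAlgebra.ι F i)

open Finsupp AddChar

theorem AddChar.zmodChar_one {C : Type*} [CommMonoid C] {n : ℕ} [NeZero n] {ζ : C}
    (hζ : ζ ^ n = 1) : AddChar.zmodChar n hζ 1 = ζ := by
  simpa using AddChar.zmodChar_apply' hζ 1

theorem mul_pow_eq_smul_pow_mul {R A : Type*} [CommSemiring R] [Semiring A] [Algebra R A]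
    {a b : A} {c : R} (h : a * b = c • (b * a)) (e : ℕ) : a * b ^ e = c ^ e • (b ^ e * a) := by
  induction e with
  | zero => simp
  | succ e ih =>
    rw [pow_succ, ← mul_assoc, ih, smul_mul_assoc, mul_assoc, h, mul_smul_comm, smul_smul,
      pow_succ, ← mul_assoc]

theorem Module.Basis.repr_apply_of_forall_apply_eq_smul {ι R M : Type*} [CommSemiring R]
    [AddCommMonoid M] [Module R M] (b : Module.Basis ι R M) (φ : M →ₗ[R] M) (μ : ι → R)
    (hφ : ∀ i, φ (b i) = μ i • b i) (x : M) (i : ι) : b.repr (φ x) i = μ i * b.repr x i := by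
  classical
  have h : (b.coord i).comp φ = μ i • b.coord i := b.ext fun j => by
    by_cases hij : j = i
    · subst hij; simp [hφ]
    · simp [hφ, Finsupp.single_eq_of_ne (Ne.symm hij)]
  exact LinearMap.congr_fun h x

namespace Clg

variable {F : Type*} [Field F] {l : ℕ} {ξ : F} {I : Type*} [LinearOrder I]

theorem gen_pow (i : I) : clgGen F l ξ i ^ l = 1 := by
  simpa [clgGen] using RingQuot.mkAlgHom_rel F (ClgRel.pow (F := F) (l := l) (ξ := ξ) i)

theorem gen_mul_gen_of_lt [NeZero l] {i j : I} (h : i < j) :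
    clgGen F l ξ j * clgGen F l ξ i = ξ • (clgGen F l ξ i * clgGen F l ξ j) := by
  have hrel : clgGen F l ξ i ^ (l - 1) * clgGen F l ξ j * clgGen F l ξ i = ξ • clgGen F l ξ j := by
    simpa [clgGen] using RingQuot.mkAlgHom_rel F (ClgRel.conj_lt (F := F) (l := l) (ξ := ξ) h)
  calc clgGen F l ξ j * clgGen F l ξ i
      = clgGen F l ξ i ^ l * (clgGen F l ξ j * clgGen F l ξ i) := by rw [gen_pow, one_mul]
    _ = clgGen F l ξ i * (clgGen F l ξ i ^ (l - 1) * clgGen F l ξ j * clgGen F l ξ i) := by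
        rw [← mul_pow_sub_one (NeZero.ne l)]; noncomm_ring
    _ = ξ • (clgGen F l ξ i * clgGen F l ξ j) := by rw [hrel, mul_smul_comm]

section lift

variable {A : Type*} [Ring A] [Algebra F A]

def lift [NeZero l] (hξ : ξ ≠ 0) (X : I → A) (hpow : ∀ i, X i ^ l = 1)
    (hcomm : ∀ ⦃i j⦄, i < j → X j * X i = ξ • (X i * X j)) : Clg F l ξ I →ₐ[F] A :=
  RingQuot.liftAlgHom F ⟨FreeAlgebra.lift F X, fun _ _ r => by
    have hinv : ∀ i, X i ^ (l - 1) * X i = 1 := fun i => by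
      rw [pow_sub_one_mul (NeZero.ne l), hpow]
    induction r with
    | pow i => simpa using hpow i
    | @conj_lt i j h =>
      simp only [map_mul, map_pow, map_smul, FreeAlgebra.lift_ι_apply]
      rw [mul_assoc, hcomm h, mul_smul_comm, ← mul_assoc, hinv, one_mul]
    | @conj_gt i j h =>
      have hcomm' : X j * X i = ξ⁻¹ • (X i * X j) := by rw [hcomm h, inv_smul_smul₀ hξ]
      simp only [map_mul, map_pow, map_smul, FreeAlgebra.lift_ι_apply]
      rw [mul_assoc, hcomm', mul_smul_comm, ← mul_assoc, hinv, one_mul]⟩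

@[simp]
theorem lift_gen [NeZero l] (hξ : ξ ≠ 0) (X : I → A) (hpow : ∀ i, X i ^ l = 1)
    (hcomm : ∀ ⦃i j⦄, i < j → X j * X i = ξ • (X i * X j)) (i : I) :
    lift hξ X hpow hcomm (clgGen F l ξ i) = X i := by
  rw [lift, clgGen, RingQuot.liftAlgHom_mkAlgHom_apply, FreeAlgebra.lift_ι_apply]

end lift

def ordSign (s t : I) : ZMod l := if s < t then 1 else if t < s then -1 else 0

section commutation

variable [NeZero l] (hξ : ξ ^ l = 1)
include hξ

theorem gen_mul_gen (s t : I) :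
    clgGen F l ξ t * clgGen F l ξ s
      = zmodChar l hξ (ordSign s t) • (clgGen F l ξ s * clgGen F l ξ t) := by
  rcases lt_trichotomy s t with hst | rfl | hts
  · rw [ordSign, if_pos hst, zmodChar_one hξ, gen_mul_gen_of_lt hst]
  · simp [ordSign]
  · rw [ordSign, if_neg hts.not_gt, if_pos hts, map_neg_eq_inv, zmodChar_one hξ,
      gen_mul_gen_of_lt hts, inv_smul_smul₀ (IsUnit.of_pow_eq_one hξ (NeZero.ne l)).ne_zero]

theorem gen_mul_gen_pow (s t : I) (e : ℕ) :
    clgGen F l ξ t * clgGen F l ξ s ^ e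
      = zmodChar l hξ ((e : ZMod l) * ordSign s t) • (clgGen F l ξ s ^ e * clgGen F l ξ t) := by
  rw [mul_pow_eq_smul_pow_mul (gen_mul_gen hξ s t), ← map_nsmul_eq_pow, nsmul_eq_mul]

end commutation

section monomial

variable (ξ) in
noncomputable def listMonomial (L : List I) (g : I →₀ ZMod l) : Clg F l ξ I :=
  (L.map fun s => clgGen F l ξ s ^ (g s).val).prod

variable (ξ) in
noncomputable def monomial (g : I →₀ ZMod l) : Clg F l ξ I :=
  listMonomial ξ (g.support.sort (· ≤ ·)) g

@[simp]
theorem listMonomial_nil (g : I →₀ ZMod l) : listMonomial ξ [] g = 1 := rfl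

@[simp]
theorem listMonomial_cons (s : I) (L : List I) (g : I →₀ ZMod l) :
    listMonomial ξ (s :: L) g = clgGen F l ξ s ^ (g s).val * listMonomial ξ L g :=
  List.prod_cons

theorem listMonomial_congr {L : List I} {g g' : I →₀ ZMod l} (h : ∀ s ∈ L, g s = g' s) :
    listMonomial ξ L g = listMonomial ξ L g' := by
  rw [listMonomial, List.map_congr_left fun s hs => by rw [h s hs], listMonomial]

@[simp]
theorem monomial_zero : monomial ξ (0 : I →₀ ZMod l) = 1 := by
  simp [monomial]

theorem listMonomial_filter_mem_support (L : List I) (g : I →₀ ZMod l) :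
    listMonomial ξ (L.filter (· ∈ g.support)) g = listMonomial ξ L g := by
  induction L with
  | nil => rfl
  | cons s L ih =>
    by_cases hs : s ∈ g.support
    · rw [List.filter_cons_of_pos (by simpa using hs), listMonomial_cons, listMonomial_cons, ih]
    · rw [List.filter_cons_of_neg (by simpa using hs), ih, listMonomial_cons,
        notMem_support_iff.1 hs, ZMod.val_zero, pow_zero, one_mul]

theorem listMonomial_eq_monomial {L : List I} (hL : L.SortedLT) {g : I →₀ ZMod l}
    (hg : ∀ s ∈ g.support, s ∈ L) : listMonomial ξ L g = monomial ξ g := by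
  have hF : (L.filter (· ∈ g.support)).Pairwise (· < ·) := hL.pairwise.filter _
  have hsort : g.support.sort (· ≤ ·) = L.filter (· ∈ g.support) := by
    rw [← (List.toFinset_sort (· ≤ ·) hF.nodup).2 (hF.imp le_of_lt)]
    congr 1
    ext s
    simpa using fun hs => hg s hs
  rw [monomial, hsort, listMonomial_filter_mem_support]

theorem gen_pow_natCast_val (t : I) (n : ℕ) :
    clgGen F l ξ t ^ (n : ZMod l).val = clgGen F l ξ t ^ n := by
  rw [ZMod.val_natCast, ← pow_eq_pow_mod _ (gen_pow t)]

theorem adjoin_range_gen : Algebra.adjoin F (Set.range (clgGen F l ξ (I := I))) = ⊤ := by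
  rw [show Set.range (clgGen F l ξ (I := I))
      = RingQuot.mkAlgHom F (ClgRel F l ξ I) '' Set.range (FreeAlgebra.ι F) from
    Set.range_comp _ _, ← AlgHom.map_adjoin, FreeAlgebra.adjoin_range_ι, Algebra.map_top,
    AlgHom.range_eq_top]
  exact RingQuot.mkAlgHom_surjective F _

variable [NeZero l] (hξ : ξ ^ l = 1)
include hξ

theorem exists_gen_mul_listMonomial {L : List I} (hL : L.Nodup) {t : I} (ht : t ∈ L)
    (g : I →₀ ZMod l) :
    ∃ c : F, clgGen F l ξ t * listMonomial ξ L g = c • listMonomial ξ L (g + single t 1) := by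
  induction L with
  | nil => cases ht
  | cons s L ih =>
    rw [List.nodup_cons] at hL
    obtain rfl | hst := eq_or_ne s t
    · refine ⟨1, ?_⟩
      have hrest : listMonomial ξ L (g + single s 1) = listMonomial ξ L g :=
        listMonomial_congr fun u hu => by simp [ne_of_mem_of_not_mem hu hL.1]
      have hexp : g s + 1 = (((g s).val + 1 : ℕ) : ZMod l) := by simp
      rw [listMonomial_cons, listMonomial_cons, hrest, one_smul, ← mul_assoc, ← pow_succ',
        Finsupp.add_apply, single_eq_same, hexp, gen_pow_natCast_val]
    · obtain ⟨c, hc⟩ := ih hL.2 ((List.mem_cons.1 ht).resolve_left hst.symm)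
      refine ⟨zmodChar l hξ (((g s).val : ZMod l) * ordSign s t) * c, ?_⟩
      rw [listMonomial_cons, listMonomial_cons, ← mul_assoc, gen_mul_gen_pow hξ, smul_mul_assoc,
        mul_assoc, hc, mul_smul_comm, smul_smul, Finsupp.add_apply, single_eq_of_ne hst, add_zero]

theorem exists_gen_mul_monomial (t : I) (g : I →₀ ZMod l) :
    ∃ c : F, clgGen F l ξ t * monomial ξ g = c • monomial ξ (g + single t 1) := by
  set L := (insert t g.support).sort (· ≤ ·)
  have hL : L.SortedLT := Finset.sortedLT_sort _
  obtain ⟨c, hc⟩ := exists_gen_mul_listMonomial hξ hL.nodup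
    ((Finset.mem_sort _).2 (Finset.mem_insert_self t _)) g
  rw [listMonomial_eq_monomial hL fun s hs => by simp [L, hs],
    listMonomial_eq_monomial hL fun s hs => by
      simpa [L] using Finset.mem_of_subset (support_add.trans
        (Finset.union_subset_union_right support_single_subset)) hs] at hc
  exact ⟨c, hc⟩

theorem span_monomial :
    Submodule.span F (Set.range (monomial ξ : (I →₀ ZMod l) → Clg F l ξ I)) = ⊤ := by
  rw [eq_top_iff, ← Algebra.top_toSubmodule, ← adjoin_range_gen, Algebra.adjoin_eq_span,
    Submodule.span_le]
  intro z hz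
  induction hz using Submonoid.closure_induction_left with
  | one => exact Submodule.subset_span ⟨0, monomial_zero⟩
  | mul_left _ hx y _ ih =>
    obtain ⟨t, rfl⟩ := hx
    suffices h : Submodule.span F (Set.range (monomial ξ)) ≤
        (Submodule.span F (Set.range (monomial ξ))).comap
          (LinearMap.mulLeft F (clgGen F l ξ t)) from
      h ih
    refine Submodule.span_le.2 ?_
    rintro _ ⟨g, rfl⟩
    obtain ⟨c, hc⟩ := exists_gen_mul_monomial hξ t g
    rw [SetLike.mem_coe, Submodule.mem_comap, LinearMap.mulLeft_apply, hc]
    exact Submodule.smul_mem _ c (Submodule.subset_span ⟨_, rfl⟩)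

end monomial

section regularRep

noncomputable def sumBelow (t : I) : (I →₀ ZMod l) →+ ZMod l :=
  liftAddHom fun s => if s < t then AddMonoidHom.id _ else 0

theorem sumBelow_single (t s : I) (v : ZMod l) :
    sumBelow t (single s v) = if s < t then v else 0 := by
  rw [sumBelow, liftAddHom_apply_single]
  split_ifs <;> rfl

variable [NeZero l] (hξ : ξ ^ l = 1)

/-- Left multiplication by `x t` in the basis of ordered monomials: moving `x t` past `x s ^ h s`
for `s < t` produces the factor `ξ ^ sumBelow t h`. -/
noncomputable def twistedShift (t : I) : Module.End F ((I →₀ ZMod l) →₀ F) :=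
  lsum F fun h => zmodChar l hξ (sumBelow t h) • lsingle (h + single t 1)

theorem twistedShift_single (t : I) (h : I →₀ ZMod l) (c : F) :
    twistedShift hξ t (single h c)
      = single (h + single t 1) (zmodChar l hξ (sumBelow t h) * c) := by
  simp [twistedShift, smul_single, mul_comm]

theorem twistedShift_pow_single (t : I) (e : ℕ) (h : I →₀ ZMod l) (c : F) :
    (twistedShift hξ t ^ e) (single h c)
      = single (h + single t (e : ZMod l)) (zmodChar l hξ (e * sumBelow t h) * c) := by
  induction e with
  | zero => simp
  | succ e ih =>
    rw [pow_succ', Module.End.mul_apply, ih, twistedShift_single, map_add, sumBelow_single,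
      if_neg (lt_irrefl t), add_zero, add_assoc, ← single_add, ← mul_assoc, ← map_add_eq_mul]
    rw [Nat.cast_succ, add_one_mul (e : ZMod l), add_comm ((e : ZMod l) * _)]

theorem twistedShift_pow_card (t : I) : twistedShift hξ t ^ l = 1 := by
  refine lhom_ext fun h c => ?_
  rw [twistedShift_pow_single, ZMod.natCast_self, single_zero, add_zero, zero_mul,
    map_zero_eq_one, one_mul, Module.End.one_apply]

theorem twistedShift_comm {i j : I} (hij : i < j) :
    twistedShift hξ j * twistedShift hξ i = ξ • (twistedShift hξ i * twistedShift hξ j) := by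
  refine lhom_ext fun h c => ?_
  simp only [Module.End.mul_apply, LinearMap.smul_apply, twistedShift_single, map_add,
    sumBelow_single, if_pos hij, if_neg hij.not_gt, add_zero, smul_single, smul_eq_mul,
    map_add_eq_mul, zmodChar_one hξ, add_right_comm h (single i 1)]
  congr 1
  ring

noncomputable def regularRep : Clg F l ξ I →ₐ[F] Module.End F ((I →₀ ZMod l) →₀ F) :=
  lift (IsUnit.of_pow_eq_one hξ (NeZero.ne l)).ne_zero (twistedShift hξ) (twistedShift_pow_card hξ)
    fun _ _ => twistedShift_comm hξ

@[simp]
theorem regularRep_gen (t : I) : regularRep hξ (clgGen F l ξ t) = twistedShift hξ t :=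
  lift_gen ..

theorem regularRep_listMonomial (L : List I) (g h : I →₀ ZMod l) {c : F} (hc : c ≠ 0) :
    ∃ c' ≠ 0, regularRep hξ (listMonomial ξ L g) (single h c)
      = single (h + (L.map fun s => single s (g s)).sum) c' := by
  induction L with
  | nil => exact ⟨c, hc, by simp⟩
  | cons s L ih =>
    obtain ⟨c', hc', hrep⟩ := ih
    refine ⟨zmodChar l hξ (g s * sumBelow s (h + (L.map fun s => single s (g s)).sum)) * c',
      mul_ne_zero (val_isUnit _ _).ne_zero hc', ?_⟩
    rw [listMonomial_cons, map_mul, map_pow, Module.End.mul_apply, hrep, regularRep_gen,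
      twistedShift_pow_single, ZMod.natCast_zmod_val, List.map_cons, List.sum_cons]
    congr 1
    abel

end regularRep

section basis

variable [NeZero l] (hξ : ξ ^ l = 1)
include hξ

theorem regularRep_monomial (g : I →₀ ZMod l) :
    ∃ c ≠ 0, regularRep hξ (monomial ξ g) (single 0 1) = single g c := by
  obtain ⟨c, hc, hrep⟩ := regularRep_listMonomial hξ (g.support.sort (· ≤ ·)) g 0 one_ne_zero
  rw [← List.sum_toFinset _ (Finset.sort_nodup _ _), Finset.sort_toFinset, zero_add] at hrep
  exact ⟨c, hc, hrep.trans (congrArg (single · c) g.sum_single)⟩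

theorem linearIndependent_monomial :
    LinearIndependent F (monomial ξ : (I →₀ ZMod l) → Clg F l ξ I) := by
  choose c hc hrep using regularRep_monomial hξ (I := I)
  refine LinearIndependent.of_comp
    ((LinearMap.applyₗ (single 0 1)).comp (regularRep hξ).toLinearMap) ?_
  have hcomp : (LinearMap.applyₗ (single 0 1)).comp (regularRep hξ).toLinearMap ∘ monomial ξ
      = fun g => single g (c g) := funext fun g => by simp [hrep]
  rw [hcomp]
  exact Finsupp.linearIndependent_single_of_ne_zero hc

noncomputable def monomialBasis : Module.Basis (I →₀ ZMod l) F (Clg F l ξ I) :=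
  .mk (linearIndependent_monomial hξ) (span_monomial hξ).ge

@[simp]
theorem monomialBasis_apply (g : I →₀ ZMod l) : monomialBasis hξ g = monomial ξ g :=
  Module.Basis.mk_apply ..

end basis

section conj

def twist (g : I →₀ ZMod l) (t : I) : ZMod l := g.sum fun s v => v * ordSign s t

variable [NeZero l] (hξ : ξ ^ l = 1)
include hξ

theorem gen_mul_listMonomial (t : I) (L : List I) (g : I →₀ ZMod l) :
    clgGen F l ξ t * listMonomial ξ L g
      = zmodChar l hξ ((L.map fun s => g s * ordSign s t).sum)
          • (listMonomial ξ L g * clgGen F l ξ t) := by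
  induction L with
  | nil => simp
  | cons s L ih =>
    rw [listMonomial_cons, ← mul_assoc, gen_mul_gen_pow hξ, smul_mul_assoc, mul_assoc, ih,
      mul_smul_comm, smul_smul, ← map_add_eq_mul, ZMod.natCast_zmod_val, List.map_cons,
      List.sum_cons, mul_assoc]

theorem gen_mul_monomial (t : I) (g : I →₀ ZMod l) :
    clgGen F l ξ t * monomial ξ g
      = zmodChar l hξ (twist g t) • (monomial ξ g * clgGen F l ξ t) := by
  rw [monomial, gen_mul_listMonomial, ← List.sum_toFinset _ (Finset.sort_nodup _ _),
    Finset.sort_toFinset]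
  rfl

theorem monomialBasis_repr_gen_mul_mul_pow (t : I) (z : Clg F l ξ I) (g : I →₀ ZMod l) :
    (monomialBasis hξ).repr (clgGen F l ξ t * z * clgGen F l ξ t ^ (l - 1)) g
      = zmodChar l hξ (twist g t) * (monomialBasis hξ).repr z g := by
  rw [mul_assoc]
  refine (monomialBasis hξ).repr_apply_of_forall_apply_eq_smul
    (LinearMap.mulLeft F (clgGen F l ξ t) ∘ₗ LinearMap.mulRight F (clgGen F l ξ t ^ (l - 1)))
    (fun g => zmodChar l hξ (twist g t)) (fun g => ?_) z g
  simp only [LinearMap.comp_apply, LinearMap.mulLeft_apply, LinearMap.mulRight_apply,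
    monomialBasis_apply, ← mul_assoc, gen_mul_monomial hξ, smul_mul_assoc]
  rw [mul_assoc, mul_pow_sub_one (NeZero.ne l), gen_pow, mul_one]

end conj

theorem twist_eq_zero_of_commute [NeZero l] (hξ : IsPrimitiveRoot ξ l) {a : Clg F l ξ I} {t : I}
    (ha : clgGen F l ξ t * a = a * clgGen F l ξ t) {g : I →₀ ZMod l}
    (hg : g ∈ ((monomialBasis hξ.pow_eq_one).repr a).support) : twist g t = 0 := by
  have h := monomialBasis_repr_gen_mul_mul_pow hξ.pow_eq_one t a g
  rw [ha, mul_assoc, mul_pow_sub_one (NeZero.ne l), gen_pow, mul_one] at h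
  refine (IsPrimitive.zmod_char_eq_one_iff l (zmodChar_primitive_of_primitive_root l hξ) _).1 ?_
  exact (mul_eq_right₀ (mem_support_iff.1 hg)).1 h.symm

open Topology in
theorem eq_zero_of_twist_ratCast_eq_zero (h2 : IsUnit (2 : ZMod l)) {g : ℝ →₀ ZMod l}
    (hg : ∀ q : ℚ, twist g (q : ℝ) = 0) : g = 0 := by
  by_contra hne
  obtain ⟨t, ht⟩ := support_nonempty_iff.2 hne
  obtain ⟨ε, hε, hisol⟩ : ∃ ε > 0, ∀ s ∈ g.support, s ≠ t → s ∉ Set.Ioo (t - ε) (t + ε) := by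
    have hS : ∀ᶠ x in 𝓝 t, x ∉ ((g.support.erase t : Finset ℝ) : Set ℝ) :=
      (g.support.erase t).finite_toSet.isClosed.isOpen_compl.mem_nhds (by simp)
    obtain ⟨ε, hε, h⟩ := Metric.eventually_nhds_iff_ball.1 hS
    exact ⟨ε, hε, fun s hs hst hsI => h s (by rwa [Real.ball_eq_Ioo]) (by simp [hs, hst])⟩
  obtain ⟨q₁, hq₁, hq₁t⟩ := exists_rat_btwn (show t - ε < t by linarith)
  obtain ⟨q₂, htq₂, hq₂⟩ := exists_rat_btwn (show t < t + ε by linarith)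
  -- between `q₁` and `q₂` only `t` passes from above to below
  have hjump : twist g q₂ - twist g q₁ = 2 * g t := by
    rw [twist, twist, Finsupp.sum, Finsupp.sum, ← Finset.sum_sub_distrib,
      Finset.sum_eq_single_of_mem t ht]
    · simp only [ordSign, htq₂, hq₁t, hq₁t.not_gt, if_true, if_false, mul_one, mul_neg,
        sub_neg_eq_add]
      ring
    · intro s hs hst
      rcases lt_or_gt_of_ne hst with hlt | hgt
      · have : s < q₁ := by
          by_contra h
          exact hisol s hs hst ⟨by linarith, by linarith⟩
        simp [ordSign, this, this.trans (hq₁t.trans htq₂)]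
      · have : (q₂ : ℝ) < s := by
          by_contra h
          exact hisol s hs hst ⟨by linarith, by linarith⟩
        simp [ordSign, this, (hq₁t.trans htq₂).trans this, this.not_gt,
          ((hq₁t.trans htq₂).trans this).not_gt]
  have h2t : 2 * g t = 0 := by rw [← hjump, hg, hg, sub_zero]
  exact mem_support_iff.1 ht (h2.mul_right_eq_zero.1 h2t)

end Clg

theorem stmt_14_general (F : Type*) [Field F] (l : ℕ) (hodd : Odd l) (ξ : F)
    (hξ : IsPrimitiveRoot ξ l) :
    Subalgebra.centralizer F {a : Clg F l ξ ℝ | ∃ q : ℚ, a = clgGen F l ξ (q : ℝ)} = ⊥ := by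
  have : NeZero l := ⟨hodd.pos.ne'⟩
  refine le_antisymm (fun a ha => ?_) bot_le
  have h2 : IsUnit (2 : ZMod l) := by
    simpa using (ZMod.isUnit_iff_coprime 2 l).2 (Nat.coprime_two_left.2 hodd)
  set b := Clg.monomialBasis (I := ℝ) hξ.pow_eq_one
  have hsupp : (b.repr a).support ⊆ {0} := fun g hg =>
    Finset.mem_singleton.2 <| Clg.eq_zero_of_twist_ratCast_eq_zero h2 fun q =>
      Clg.twist_eq_zero_of_commute hξ ((Subalgebra.mem_centralizer_iff F).1 ha _ ⟨q, rfl⟩) hg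
  obtain ⟨c, hc⟩ := Finsupp.support_subset_singleton'.1 hsupp
  rw [Algebra.mem_bot]
  refine ⟨c, ?_⟩
  rw [← b.repr.symm_apply_apply a, hc, b.repr_symm_single, Clg.monomialBasis_apply,
    Clg.monomial_zero, Algebra.algebraMap_eq_smul_one]

/-- Lemma 1 of the paper: for odd `l ≥ 3`, the centralizer in
`Clg(l, ℝ)` of the set of generators indexed by the rational numbers is `F·1`. -/
theorem stmt_14 (F : Type*) [Field F] (l : ℕ) (hl : 3 ≤ l) (hodd : Odd l) (ξ : F)
    (hξ : IsPrimitiveRoot ξ l) :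
    Subalgebra.centralizer F {a : Clg F l ξ ℝ | ∃ q : ℚ, a = clgGen F l ξ (q : ℝ)} = ⊥ :=
  stmt_14_general F l hodd ξ hξ
end
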